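/- In dimension 2, the two mutations with respect to opposite factors are GL(2,ℤ)-equivalent: mut_w(P, F) ≅ mut_w(P, −F) where F = conv{0, u_E} and −F = conv{0, −u_E}. -/

import Mathlib

open Set Pointwise

noncomputable section

/-- the real vector space `N_ℝ = N ⊗ ℝ` for the lattice `N ≅ ℤᵈ` -/
abbrev RVec (d : ℕ) := Fin d → ℝ

/-- the inclusion of the lattice `N = ℤᵈ` into `N_ℝ` -/
def toR {d : ℕ} (u : Fin d → ℤ) : RVec d := fun i => (u i : ℝ)

/-- the pairing `⟨w, u⟩` of `w ∈ M = Hom(N, ℤ)` with `u ∈ N_ℝ` -/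
def pairR {d : ℕ} (w : Fin d → ℤ) (u : RVec d) : ℝ := ∑ i, (w i : ℝ) * u i

/-- `P` is a lattice polytope: the convex hull of finitely many lattice points. -/
def IsLatticePolytope {d : ℕ} (P : Set (RVec d)) : Prop :=
  ∃ S : Finset (Fin d → ℤ), S.Nonempty ∧ P = convexHull ℝ (toR '' ↑S)

/-- `w ∈ M ≅ ℤᵈ` is a primitive lattice vector -/
def IsPrimitive {d : ℕ} (w : Fin d → ℤ) : Prop := Finset.univ.gcd w = 1

/-- `w_h(P)`: the convex hull of the lattice points of `P` at height `h` with
respect to `w` -/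
def heightSlice {d : ℕ} (w : Fin d → ℤ) (h : ℤ) (P : Set (RVec d)) : Set (RVec d) :=
  convexHull ℝ (toR '' {u : Fin d → ℤ | toR u ∈ P ∧ pairR w (toR u) = (h : ℝ)})

/-- `F` is a lattice polytope lying at height `0` with respect to `w`
(a candidate factor of a polytope with respect to `w`). -/
def IsFactorShape {d : ℕ} (w : Fin d → ℤ) (F : Set (RVec d)) : Prop :=
  IsLatticePolytope F ∧ ∀ x ∈ F, pairR w x = 0

/-- The family `G` witnesses that `F` is a factor of `P` with respect to `w`:
for every negative height `h`, `G h` is a possibly empty lattice polytope satisfying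
the sandwich condition `{u ∈ 𝒱(P) : ⟨w,u⟩ = h} ⊆ G h + (−h)·F ⊆ w_h(P)`,
where `𝒱(P)` is the set of vertices (extreme points) of `P`, `+` is the Minkowski
sum (with `Q + ∅ = ∅`), and `(−h)·F` is the `(−h)`-fold Minkowski sum of `F`. -/
def IsMutationWitness {d : ℕ} (w : Fin d → ℤ) (F : Set (RVec d))
    (G : ℤ → Set (RVec d)) (P : Set (RVec d)) : Prop :=
  ∀ h : ℤ, h < 0 →
    (G h = ∅ ∨ IsLatticePolytope (G h)) ∧
    {x | x ∈ Set.extremePoints ℝ P ∧ pairR w x = (h : ℝ)} ⊆ G h + (-h : ℝ) • F ∧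
    G h + (-h : ℝ) • F ⊆ heightSlice w h P

/-- the combinatorial mutation `mut_w(P, F)` of `P` given by the vector `w`, the
factor `F` and the polytopes `{G_h}`:
`mut_w(P,F) = conv( ⋃_{h<0} G_h ∪ ⋃_{h≥0} (w_h(P) + h·F) )` -/
def mutation {d : ℕ} (w : Fin d → ℤ) (F : Set (RVec d)) (G : ℤ → Set (RVec d))
    (P : Set (RVec d)) : Set (RVec d) :=
  convexHull ℝ ((⋃ (h : ℤ) (_ : h < 0), G h) ∪
    ⋃ h : ℕ, (heightSlice w (h : ℤ) P + (h : ℝ) • F))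

/-- Two subsets of `ℝ²` are `GL(2,ℤ)`-equivalent: one is carried to the other by a
unimodular integral linear map, possibly composed with a lattice translation. -/
def GL2ZEquiv (P Q : Set (RVec 2)) : Prop :=
  ∃ (A : Matrix (Fin 2) (Fin 2) ℤ) (t : Fin 2 → ℤ), IsUnit A.det ∧
    Q = (fun x : RVec 2 => (fun i => ∑ j, (A i j : ℝ) * x j) + toR t) '' P


/-! The shear `ψ x = x - ⟨w, x⟩ • u_E` is given by the integral matrix `1 - u_E wᵀ` of
determinant `1 - ⟨w, u_E⟩ = 1`. At height `h` it is the translation by `-h • u_E`, so it carries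
`w_h(P) + h • F` to `w_h(P) + h • (-F)` and turns witnesses `G_h` for `F` into witnesses
`ψ(G_h)` for `-F`; hence `ψ(mut_w(P, F)) = mut_w(P, -F)` computed with the witnesses `ψ(G_h)`.

It remains to see that a mutation does not depend on its witnesses. Inside `M = mut_w(P, F)`,
every point `x` of `P` can be moved along `u_E` down to some `x - t • u_E` (`t ≥ 0`) and up to
some `x + s • u_E` (`s ≥ ⟨w, x⟩`): at a vertex this is the sandwich condition (or the slice
part of `M` at nonnegative height), and both properties survive convex combinations. A point
`g` of another witness `G'_h` has `g` and `g - h • u_E` in `w_h(P)`, so moving down from the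
first and up from the second brackets `g` between two points of `M`. -/

section Convexity

variable {E : Type*} [AddCommGroup E] [Module ℝ E]

lemma mem_smul_segment_zero {c : ℝ} {z x : E} :
    x ∈ c • segment ℝ 0 z ↔ ∃ t ∈ Icc (0 : ℝ) 1, x = (c * t) • z := by
  simp only [segment_eq_image', sub_zero, zero_add, Set.mem_smul_set, Set.mem_image]
  constructor
  · rintro ⟨_, ⟨t, ht, rfl⟩, rfl⟩
    exact ⟨t, ht, smul_smul c t z⟩
  · rintro ⟨t, ht, rfl⟩
    exact ⟨_, ⟨t, ht, rfl⟩, smul_smul c t z⟩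

lemma neg_smul_segment_neg (c : ℝ) (z : E) : (-c) • segment ℝ 0 (-z) = c • segment ℝ 0 z := by
  ext x
  simp only [mem_smul_segment_zero, neg_mul, neg_smul_neg]

lemma Convex.mem_of_sub_smul_mem_of_add_smul_mem {M : Set E} (hM : Convex ℝ M) {x z : E}
    {t s : ℝ} (ht : 0 ≤ t) (hs : 0 ≤ s) (h₁ : x - t • z ∈ M) (h₂ : x + s • z ∈ M) : x ∈ M := by
  have hline : Convex ℝ {r : ℝ | x + r • z ∈ M} :=
    (hM.translate_preimage_right x).linear_preimage (LinearMap.toSpanSingleton ℝ E z)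
  have h₁' : -t ∈ {r : ℝ | x + r • z ∈ M} := by simpa [neg_smul, ← sub_eq_add_neg] using h₁
  simpa using hline.ordConnected.out h₁' h₂ ⟨neg_nonpos.2 ht, hs⟩

lemma Convex.convex_setOf_exists_le_add_smul_mem {M : Set E} (hM : Convex ℝ M) {f : E → ℝ}
    (hf : ConvexOn ℝ univ f) (z : E) : Convex ℝ {x | ∃ s, f x ≤ s ∧ x + s • z ∈ M} := by
  rintro x ⟨s₁, hs₁, hx⟩ y ⟨s₂, hs₂, hy⟩ a b ha hb hab
  refine ⟨a * s₁ + b * s₂, ?_, ?_⟩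
  · calc f (a • x + b • y) ≤ a • f x + b • f y := hf.2 trivial trivial ha hb hab
      _ ≤ a * s₁ + b * s₂ := by simp only [smul_eq_mul]; gcongr
  · convert hM hx hy ha hb hab using 1
    module

end Convexity

section Lattice

variable {d : ℕ}

lemma pairR_add (w : Fin d → ℤ) (x y : RVec d) : pairR w (x + y) = pairR w x + pairR w y :=
  dotProduct_add (toR w) x y

lemma pairR_smul (w : Fin d → ℤ) (c : ℝ) (x : RVec d) : pairR w (c • x) = c • pairR w x :=
  dotProduct_smul c (toR w) x

lemma pairR_toR (w u : Fin d → ℤ) : pairR w (toR u) = ((w ⬝ᵥ u : ℤ) : ℝ) := by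
  simp [pairR, toR, dotProduct]

lemma toR_neg (u : Fin d → ℤ) : toR (-u) = -toR u := by
  ext i
  simp [toR]

def pairRₗ (w : Fin d → ℤ) : RVec d →ₗ[ℝ] ℝ where
  toFun := pairR w
  map_add' := pairR_add w
  map_smul' := pairR_smul w

lemma IsLatticePolytope.extremePoints_subset_range_toR {P : Set (RVec d)}
    (hP : IsLatticePolytope P) : extremePoints ℝ P ⊆ range toR := by
  obtain ⟨S, -, rfl⟩ := hP
  exact extremePoints_convexHull_subset.trans (image_subset_range _ _)

lemma IsLatticePolytope.convexHull_extremePoints {P : Set (RVec d)}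
    (hP : IsLatticePolytope P) : convexHull ℝ (extremePoints ℝ P) = P := by
  obtain ⟨S, -, rfl⟩ := hP
  have hfin : (toR '' (S : Set (Fin d → ℤ))).Finite := S.finite_toSet.image _
  have hext : (extremePoints ℝ (convexHull ℝ (toR '' (S : Set (Fin d → ℤ))))).Finite :=
    hfin.subset extremePoints_convexHull_subset
  rw [← (hext.isClosed_convexHull ℝ).closure_eq]
  exact closure_convexHull_extremePoints (hfin.isCompact_convexHull ℝ) (convex_convexHull ℝ _)

variable {w : Fin d → ℤ} {h : ℤ} {P : Set (RVec d)}

lemma heightSlice_subset (hP : Convex ℝ P) : heightSlice w h P ⊆ P :=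
  convexHull_min (by rintro _ ⟨u, ⟨hu, -⟩, rfl⟩; exact hu) hP

lemma pairR_of_mem_heightSlice {x : RVec d} (hx : x ∈ heightSlice w h P) :
    pairR w x = h := by
  exact convexHull_min (by rintro _ ⟨u, ⟨-, hu⟩, rfl⟩; exact hu)
    (convex_hyperplane (pairRₗ w).isLinear h) hx

lemma toR_mem_heightSlice {u : Fin d → ℤ} (hu : toR u ∈ P) :
    toR u ∈ heightSlice w (w ⬝ᵥ u) P :=
  subset_convexHull ℝ _ ⟨u, ⟨hu, pairR_toR w u⟩, rfl⟩

end Lattice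

section Mutation

variable {d : ℕ} {w : Fin d → ℤ} {F : Set (RVec d)} {G G' : ℤ → Set (RVec d)}
  {P : Set (RVec d)}

lemma subset_mutation_of_neg {h : ℤ} (hh : h < 0) : G h ⊆ mutation w F G P :=
  fun _ hx ↦ subset_convexHull ℝ _ (Or.inl (mem_biUnion hh hx))

lemma heightSlice_add_subset_mutation {h : ℤ} (hh : 0 ≤ h) :
    heightSlice w h P + (h : ℝ) • F ⊆ mutation w F G P := by
  lift h to ℕ using hh
  exact fun _ hx ↦ subset_convexHull ℝ _ (Or.inr (mem_iUnion_of_mem h hx))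

variable {z : RVec d}

lemma exists_smul_mem_mutation_of_mem_extremePoints (hP : IsLatticePolytope P)
    (hG : IsMutationWitness w (segment ℝ 0 z) G P) {v : RVec d} (hv : v ∈ extremePoints ℝ P) :
    (∃ t : ℝ, 0 ≤ t ∧ v - t • z ∈ mutation w (segment ℝ 0 z) G P) ∧
      ∃ s, pairR w v ≤ s ∧ v + s • z ∈ mutation w (segment ℝ 0 z) G P := by
  obtain ⟨u, rfl⟩ := hP.extremePoints_subset_range_toR hv
  set h := w ⬝ᵥ u
  have hu : pairR w (toR u) = h := pairR_toR w u
  rcases le_or_gt 0 h with hh | hh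
  · have hslice := toR_mem_heightSlice (w := w) (extremePoints_subset hv)
    refine ⟨⟨0, le_rfl, ?_⟩, h, hu.le, ?_⟩ <;> apply heightSlice_add_subset_mutation hh
    · simpa using subset_add_left _ (zero_mem_smul_set (left_mem_segment ℝ 0 z)) hslice
    · exact add_mem_add hslice (smul_mem_smul_set (right_mem_segment ℝ 0 z))
  · obtain ⟨g, hg, _, hf, hgf⟩ := (hG h hh).2.1 ⟨hv, hu⟩
    obtain ⟨t, ⟨ht₀, ht₁⟩, rfl⟩ := mem_smul_segment_zero.1 hf
    rw [← hgf] at hu ⊢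
    have hgM : g ∈ mutation w (segment ℝ 0 z) G P := subset_mutation_of_neg hh hg
    have hh' : (h : ℝ) < 0 := by exact_mod_cast hh
    refine ⟨⟨-h * t, by nlinarith, by simpa using hgM⟩, h * t, ?_, by simpa using hgM⟩
    rw [hu]
    nlinarith

lemma mutation_subset_of_isMutationWitness (hP : IsLatticePolytope P)
    (hG : IsMutationWitness w (segment ℝ 0 z) G P)
    (hG' : IsMutationWitness w (segment ℝ 0 z) G' P) :
    mutation w (segment ℝ 0 z) G P ⊆ mutation w (segment ℝ 0 z) G' P := by
  set M := mutation w (segment ℝ 0 z) G' P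
  have hM : Convex ℝ M := convex_convexHull ℝ _
  have hdown : P ⊆ {x | ∃ t : ℝ, 0 ≤ t ∧ x - t • z ∈ M} := by
    rw [← hP.convexHull_extremePoints]
    refine convexHull_min
      (fun v hv ↦ (exists_smul_mem_mutation_of_mem_extremePoints hP hG' hv).1) ?_
    simpa only [smul_neg, ← sub_eq_add_neg] using
      hM.convex_setOf_exists_le_add_smul_mem (convexOn_const 0 convex_univ) (-z)
  have hup : P ⊆ {x | ∃ s, pairR w x ≤ s ∧ x + s • z ∈ M} := by
    rw [← hP.convexHull_extremePoints]
    exact convexHull_min (fun v hv ↦ (exists_smul_mem_mutation_of_mem_extremePoints hP hG' hv).2)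
      (hM.convex_setOf_exists_le_add_smul_mem ((pairRₗ w).convexOn convex_univ) z)
  have hPconv : Convex ℝ P := hP.convexHull_extremePoints ▸ convex_convexHull ℝ _
  refine convexHull_min (union_subset (iUnion₂_subset fun h hh x hx ↦ ?_)
    (iUnion_subset fun n ↦ heightSlice_add_subset_mutation n.cast_nonneg)) hM
  have hslice := (hG h hh).2.2
  have hx₁ : x ∈ heightSlice w h P :=
    hslice (subset_add_left _ (zero_mem_smul_set (left_mem_segment ℝ 0 z)) hx)
  have hx₂ : x + (-h : ℝ) • z ∈ heightSlice w h P :=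
    hslice (add_mem_add hx (smul_mem_smul_set (right_mem_segment ℝ 0 z)))
  obtain ⟨t, ht, hxt⟩ := hdown (heightSlice_subset hPconv hx₁)
  obtain ⟨s, hs, hxs⟩ := hup (heightSlice_subset hPconv hx₂)
  rw [pairR_of_mem_heightSlice hx₂] at hs
  have hh' : (h : ℝ) < 0 := by exact_mod_cast hh
  refine hM.mem_of_sub_smul_mem_of_add_smul_mem ht (s := -h + s) (by linarith) hxt ?_
  convert hxs using 1
  module

lemma mutation_eq_of_isMutationWitness (hP : IsLatticePolytope P)
    (hG : IsMutationWitness w (segment ℝ 0 z) G P)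
    (hG' : IsMutationWitness w (segment ℝ 0 z) G' P) :
    mutation w (segment ℝ 0 z) G P = mutation w (segment ℝ 0 z) G' P :=
  (mutation_subset_of_isMutationWitness hP hG hG').antisymm
    (mutation_subset_of_isMutationWitness hP hG' hG)

end Mutation

section Shear

variable {d : ℕ} {w u : Fin d → ℤ}

variable (w u) in
def shear : RVec d →ₗ[ℝ] RVec d := LinearMap.id - (pairRₗ w).smulRight (toR u)

lemma shear_apply (x : RVec d) : shear w u x = x - pairR w x • toR u := rfl

lemma shear_toR (m : Fin d → ℤ) : shear w u (toR m) = toR (m - (w ⬝ᵥ m) • u) := by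
  ext i
  simp [shear_apply, pairR_toR, toR]

lemma IsLatticePolytope.image_shear {Q : Set (RVec d)} (hQ : IsLatticePolytope Q) :
    IsLatticePolytope (shear w u '' Q) := by
  obtain ⟨S, hS, rfl⟩ := hQ
  refine ⟨S.image fun m ↦ m - (w ⬝ᵥ m) • u, hS.image _, ?_⟩
  rw [(shear w u).image_convexHull, Finset.coe_image, image_image, image_image]
  simp_rw [shear_toR]

lemma shear_image_add_smul_segment {A : Set (RVec d)} {c : ℝ} (hA : ∀ a ∈ A, pairR w a = c) :
    shear w u '' A + c • segment ℝ 0 (toR u) = A + c • segment ℝ 0 (-toR u) := by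
  ext x
  constructor
  · rintro ⟨_, ⟨a, ha, rfl⟩, _, hf, rfl⟩
    obtain ⟨t, ⟨ht₀, ht₁⟩, rfl⟩ := mem_smul_segment_zero.1 hf
    refine ⟨a, ha, (c * (1 - t)) • -toR u,
      mem_smul_segment_zero.2 ⟨1 - t, ⟨by linarith, by linarith⟩, rfl⟩, ?_⟩
    simp only [shear_apply, hA a ha]
    module
  · rintro ⟨a, ha, _, hf, rfl⟩
    obtain ⟨t, ⟨ht₀, ht₁⟩, rfl⟩ := mem_smul_segment_zero.1 hf
    refine ⟨shear w u a, mem_image_of_mem _ ha, (c * (1 - t)) • toR u,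
      mem_smul_segment_zero.2 ⟨1 - t, ⟨by linarith, by linarith⟩, rfl⟩, ?_⟩
    simp only [shear_apply, hA a ha]
    module

lemma shear_image_add_smul_segment_of_pairR_eq_zero (hu : pairR w (toR u) = 0)
    (A : Set (RVec d)) (c : ℝ) : shear w u '' (A + c • segment ℝ 0 (toR u)) =
      shear w u '' A + c • segment ℝ 0 (toR u) := by
  rw [image_add, image_smul_set, ← (shear w u).coe_toAffineMap, image_segment,
    LinearMap.coe_toAffineMap, map_zero, shear_apply, hu, zero_smul, sub_zero]

lemma IsMutationWitness.image_shear {G : ℤ → Set (RVec d)} {P : Set (RVec d)}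
    (hG : IsMutationWitness w (segment ℝ 0 (toR u)) G P) :
    IsMutationWitness w (segment ℝ 0 (-toR u)) (fun h ↦ shear w u '' G h) P := by
  intro h hh
  obtain ⟨hpoly, hvert, hslice⟩ := hG h hh
  have hGh (g : RVec d) (hg : g ∈ G h) : pairR w g = h :=
    pairR_of_mem_heightSlice
      (hslice (subset_add_left _ (zero_mem_smul_set (left_mem_segment ℝ 0 _)) hg))
  have hsum : shear w u '' G h + (-h : ℝ) • segment ℝ 0 (-toR u) =
      G h + (-h : ℝ) • segment ℝ 0 (toR u) := by
    rw [neg_smul_segment_neg, shear_image_add_smul_segment hGh, ← neg_smul_segment_neg, neg_neg]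
  refine ⟨hpoly.imp (fun hempty ↦ by simp [hempty]) IsLatticePolytope.image_shear, ?_⟩
  rw [hsum]
  exact ⟨hvert, hslice⟩

lemma shear_image_mutation (hu : pairR w (toR u) = 0) (G : ℤ → Set (RVec d))
    (P : Set (RVec d)) :
    shear w u '' mutation w (segment ℝ 0 (toR u)) G P =
      mutation w (segment ℝ 0 (-toR u)) (fun h ↦ shear w u '' G h) P := by
  simp only [mutation, (shear w u).image_convexHull, image_union, image_iUnion,
    shear_image_add_smul_segment_of_pairR_eq_zero hu]
  congr! 4 with n
  exact shear_image_add_smul_segment fun _ ↦ pairR_of_mem_heightSlice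

end Shear

lemma Matrix.det_one_sub_vecMulVec {n R : Type*} [Fintype n] [DecidableEq n] [CommRing R]
    (u v : n → R) : (1 - vecMulVec u v).det = 1 - v ⬝ᵥ u := by
  rw [vecMulVec_eq Unit, det_one_sub_mul_comm, det_unique, sub_apply, one_apply_eq,
    replicateRow_mul_replicateCol_apply]

lemma shear_apply_eq_mulVec {d : ℕ} (w u : Fin d → ℤ) (x : RVec d) :
    shear w u x = Matrix.mulVec ((1 - Matrix.vecMulVec u w).map (Int.cast : ℤ → ℝ)) x := by
  ext i
  simp only [shear_apply, Matrix.mulVec, dotProduct, Matrix.map_apply, Matrix.sub_apply,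
    Matrix.one_apply, Matrix.vecMulVec_apply, Int.cast_sub, Int.cast_mul, Int.cast_ite,
    Int.cast_one, Int.cast_zero, sub_mul, ite_mul, one_mul, zero_mul, Finset.sum_sub_distrib,
    Finset.sum_ite_eq, Finset.mem_univ, if_true, Pi.sub_apply, Pi.smul_apply, smul_eq_mul, pairR,
    toR, Finset.sum_mul]
  congr 1
  exact Finset.sum_congr rfl fun j _ ↦ by ring

theorem mutation_neg_factor_equiv_general (P : Set (RVec 2)) (hP : IsLatticePolytope P)
    (w : Fin 2 → ℤ)
    (uE : Fin 2 → ℤ) (hperp : pairR w (toR uE) = 0)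
    (G G' : ℤ → Set (RVec 2))
    (hG : IsMutationWitness w (segment ℝ 0 (toR uE)) G P)
    (hG' : IsMutationWitness w (segment ℝ 0 (toR (-uE))) G' P) :
    GL2ZEquiv (mutation w (segment ℝ 0 (toR uE)) G P)
      (mutation w (segment ℝ 0 (toR (-uE))) G' P) := by
  rw [toR_neg] at hG' ⊢
  have hdot : w ⬝ᵥ uE = 0 := by exact_mod_cast (pairR_toR w uE).symm.trans hperp
  refine ⟨1 - Matrix.vecMulVec uE w, 0, ?_, ?_⟩
  · rw [Matrix.det_one_sub_vecMulVec, hdot, sub_zero]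
    exact isUnit_one
  · have hmap : (fun x : RVec 2 ↦
        (fun i ↦ ∑ j, ((1 - Matrix.vecMulVec uE w) i j : ℝ) * x j) + toR 0) = shear w uE := by
      ext x i
      simp [shear_apply_eq_mulVec, toR, Matrix.mulVec, dotProduct]
    rw [hmap, shear_image_mutation hperp, mutation_eq_of_isMutationWitness hP hG' hG.image_shear]

/-- In dimension `2`, the two mutations with respect to opposite factors are
`GL(2,ℤ)`-equivalent: `mut_w(P, F) ≅ mut_w(P, −F)`, where `P` is a lattice polygon
admitting a mutation with respect to the primitive inner normal vector `w` of an
edge `E` of `P`, `u_E` is a primitive lattice vector with `⟨w, u_E⟩ = 0`, and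
`F = conv{0, u_E}`, `−F = conv{0, −u_E}`. -/
theorem mutation_neg_factor_equiv (P : Set (RVec 2)) (hP : IsLatticePolytope P)
    (w : Fin 2 → ℤ) (hw : IsPrimitive w)
    -- `w` is the inner normal vector of an edge `E` of `P` (the face of `P` where
    -- `⟨w,·⟩` attains its minimum contains at least two points):
    (hE : ∃ x y, x ∈ P ∧ y ∈ P ∧ x ≠ y ∧
      pairR w x = sInf (pairR w '' P) ∧ pairR w y = sInf (pairR w '' P))
    (uE : Fin 2 → ℤ) (huE : IsPrimitive uE) (hperp : pairR w (toR uE) = 0)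
    (G G' : ℤ → Set (RVec 2))
    (hG : IsMutationWitness w (segment ℝ 0 (toR uE)) G P)
    (hG' : IsMutationWitness w (segment ℝ 0 (toR (-uE))) G' P) :
    GL2ZEquiv (mutation w (segment ℝ 0 (toR uE)) G P)
      (mutation w (segment ℝ 0 (toR (-uE))) G' P) :=
  mutation_neg_factor_equiv_general P hP w uE hperp G G' hG hG'
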